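/- arXiv:1108.4201 — 9 statements merged into one kernel-verified Lean document; each statement's English description precedes it below -/
import Mathlib

section
/- Let f : ℝ → ℝ and a : ℝ. Then f is continuous at a if and only if for every hyperreal x infinitely close to a (i.e., Hyperreal.IsSt x a), the natural extension of f satisfies Hyperreal.IsSt (Filter.Germ.map f x) (f a). (Robinson's nonstandard characterization of Cauchy's infinitesimal definition of continuity: an infinitely small increment of the variable always produces an infinitely small increment of the function.) -/
open Hyperreal Filter Topology

/-- If `f ∘ u` did not converge along `atTop`, a subsequence would stay outside some `s ∈ l`,
contradicting its convergence along the nontrivial filter `L`. -/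
theorem Filter.tendsto_of_forall_seq_tendsto {α β : Type*} {f : α → β} {k : Filter α}
    [k.IsCountablyGenerated] {l : Filter β} (L : Filter ℕ) [L.NeBot]
    (h : ∀ u : ℕ → α, Tendsto u atTop k → Tendsto (f ∘ u) L l) : Tendsto f k l := by
  refine tendsto_iff_seq_tendsto.2 fun u hu ↦ ?_
  by_contra hfu
  obtain ⟨s, hs, hfrequently⟩ := not_tendsto_iff_exists_frequently_notMem.1 hfu
  obtain ⟨φ, hφ, hφs⟩ := extraction_of_frequently_atTop hfrequently
  have hmem : ∀ᶠ n in L, f (u (φ n)) ∈ s := h (u ∘ φ) (hu.comp hφ.tendsto_atTop) hs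
  obtain ⟨n, hn⟩ := hmem.exists
  exact hφs n hn

theorem cauchy_continuity_nonstandard (f : ℝ → ℝ) (a : ℝ) :
    ContinuousAt f a ↔
      ∀ x : ℝ*, Hyperreal.IsSt x a → Hyperreal.IsSt (Filter.Germ.map f x) (f a) := by
  constructor
  · exact fun hf x hx ↦ isSt_iff_tendsto.2 (stdPart_map hf (isSt_iff_tendsto.1 hx))
  · intro h
    exact tendsto_of_forall_seq_tendsto (hyperfilter ℕ) fun u hu ↦
      isSt_iff_tendsto.1 (h (ofSeq u) (isSt_of_tendsto hu))
end

section
/- Let a : ℕ → ℝ be a real sequence and L : ℝ. Then a tends to L (Filter.Tendsto a Filter.atTop (nhds L)) if and only if for every infinite hypernatural N, the hyperreal Filter.Germ.map a N is infinitely close to L (Hyperreal.IsSt (Filter.Germ.map a N) L). (Nonstandard characterization of the limit of a variable quantity.) -/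
/-!
An infinite hypernatural is the germ of some `φ : ℕ → ℕ` tending to infinity along the
hyperfilter, and `Germ.map a N` is infinitely close to `L` exactly when `a ∘ φ → L` along the
hyperfilter. If `a` does not tend to `L`, a subsequence `a ∘ φ` stays outside a fixed
neighbourhood of `L`, and this strictly monotone `φ` gives an infinite hypernatural witnessing
the failure.
-/

open Hyperreal Filter

/-- The hypernaturals: the ultrapower of `ℕ` by the hyperfilter on `ℕ`. -/
abbrev Hypernat : Type := Filter.Germ (Filter.hyperfilter ℕ : Filter ℕ) ℕ

notation "ℕ*" => Hypernat

theorem Filter.Germ.forall_const_lt_coe_iff_tendsto_atTop {α β : Type*} [LinearOrder β]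
    [Nonempty β] [NoMaxOrder β] {U : Ultrafilter α} {f : α → β} :
    (∀ b : β, (↑b : Germ (U : Filter α) β) < ↑f) ↔ Tendsto f U atTop := by
  simp only [atTop_basis_Ioi.tendsto_right_iff, forall_const, Set.mem_Ioi]
  exact forall_congr' fun b => Germ.coe_lt

theorem Filter.tendsto_atTop_iff_forall_tendsto_hyperfilter {β : Type*} {u : ℕ → β}
    {l : Filter β} :
    Tendsto u atTop l ↔
      ∀ φ : ℕ → ℕ, Tendsto φ (hyperfilter ℕ) atTop → Tendsto (u ∘ φ) (hyperfilter ℕ) l := by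
  refine ⟨fun h φ hφ => h.comp hφ, fun h => ?_⟩
  by_contra hu
  obtain ⟨s, hs, hfreq⟩ := not_tendsto_iff_exists_frequently_notMem.1 hu
  obtain ⟨φ, hφ, hφs⟩ := extraction_of_frequently_atTop hfreq
  have hφ_tendsto : Tendsto φ (hyperfilter ℕ) atTop :=
    hφ.tendsto_atTop.mono_left Nat.hyperfilter_le_atTop
  obtain ⟨n, hn⟩ := ((h φ hφ_tendsto).eventually_mem hs).exists
  exact hφs n hn

theorem tendsto_iff_isSt_of_infinite (a : ℕ → ℝ) (L : ℝ) :
    Filter.Tendsto a Filter.atTop (nhds L) ↔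
      ∀ N : ℕ*, (∀ m : ℕ, (m : ℕ*) < N) →
        Hyperreal.IsSt (Filter.Germ.map a N) L := by
  rw [tendsto_atTop_iff_forall_tendsto_hyperfilter]
  refine ⟨fun h N hN => ?_, fun h φ hφ => ?_⟩
  · induction N using Germ.inductionOn with
    | h φ => exact isSt_iff_tendsto.2 (h φ (Germ.forall_const_lt_coe_iff_tendsto_atTop.1 hN))
  · exact isSt_iff_tendsto.1 (h φ (Germ.forall_const_lt_coe_iff_tendsto_atTop.2 hφ))
end

section
/- Let f : ℕ → ℝ → ℝ, g : ℝ → ℝ, and S ⊆ ℝ. Then (f n) converges uniformly to g on S (TendstoUniformlyOn f g Filter.atTop S) if and only if for every infinite hypernatural N and every hyperreal X belonging to the natural extension of S (i.e., Filter.Germ.LiftPred (· ∈ S) X), the hyperreal Filter.Germ.map₂ f N X − Filter.Germ.map g X is infinitesimal. (Uniform convergence is equivalent to the error term going to zero at ALL values of x in the B-continuum, for all infinite indices.) -/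
/-!
Uniform convergence of `f n` to `g` on `S` is the convergence of `(n, x) ↦ f n x - g x` to `0`
along `atTop ×ˢ 𝓟 S`. This filter is countably generated, so the convergence may be tested on
sequences `i ↦ (n i, x i)`, and even along the hyperfilter, because a sequence witnessing a
failure does so at every index. A pair of such sequences is exactly a pair `(N, X)` of a
hypernatural and a hyperreal: `n i → ∞` along the hyperfilter says that `N` is infinite,
`x i ∈ S` eventually says that `X` lies in the extension of `S`, and convergence to `0` along
the hyperfilter says that `f N X - g X` is infinitesimal.
-/

open Hyperreal Filter

open Topology

theorem tendstoUniformlyOn_iff_tendsto_sub {ι α G : Type*} [UniformSpace G] [AddGroup G]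
    [IsRightUniformAddGroup G] {F : ι → α → G} {f : α → G} {p : Filter ι} {s : Set α} :
    TendstoUniformlyOn F f p s ↔
      Tendsto (fun q : ι × α => F q.1 q.2 - f q.2) (p ×ˢ 𝓟 s) (𝓝 0) := by
  rw [tendstoUniformlyOn_iff_tendsto, uniformity_eq_comap_nhds_zero, tendsto_comap_iff]
  rfl

theorem Filter.tendsto_iff_seq_tendsto_of_le_atTop {α β : Type*} {f : α → β} {k : Filter α}
    {l : Filter β} [k.IsCountablyGenerated] {u : Filter ℕ} [u.NeBot] (hu : u ≤ atTop) :
    Tendsto f k l ↔ ∀ x : ℕ → α, Tendsto x u k → Tendsto (f ∘ x) u l := by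
  refine ⟨fun h x hx => h.comp hx, fun H s hs => ?_⟩
  by_contra hfs
  obtain ⟨x, hx, hxs⟩ :=
    exists_seq_forall_of_frequently (show ∃ᶠ a in k, f a ∉ s from not_eventually.1 hfs)
  obtain ⟨i, hi⟩ := ((H x (hx.mono_left hu)).eventually_mem hs).exists
  exact hxs i hi

theorem Filter.Germ.forall_natCast_lt_coe_iff_tendsto {α : Type*} {φ : Ultrafilter α}
    {n : α → ℕ} : (∀ m : ℕ, (m : Germ (φ : Filter α) ℕ) < n) ↔ Tendsto n φ atTop := by
  simp_rw [← Germ.natCast_def, Germ.coe_lt, (atTop_basis_Ioi (α := ℕ)).tendsto_right_iff,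
    Set.mem_Ioi, true_implies, Nat.cast_id]

theorem Hyperreal.infinitesimal_ofSeq_iff {u : ℕ → ℝ} :
    Infinitesimal (ofSeq u) ↔ Tendsto u (hyperfilter ℕ) (𝓝 0) :=
  isSt_ofSeq_iff_tendsto

theorem tendstoUniformlyOn_iff_infinitesimal (f : ℕ → ℝ → ℝ) (g : ℝ → ℝ) (S : Set ℝ) :
    TendstoUniformlyOn f g Filter.atTop S ↔
      ∀ N : ℕ*, (∀ m : ℕ, (m : ℕ*) < N) →
        ∀ X : ℝ*, Filter.Germ.LiftPred (· ∈ S) X →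
          Hyperreal.Infinitesimal (Filter.Germ.map₂ f N X - Filter.Germ.map g X) := by
  rw [tendstoUniformlyOn_iff_tendsto_sub,
    tendsto_iff_seq_tendsto_of_le_atTop Nat.hyperfilter_le_atTop]
  constructor
  · intro h N hN X hX
    induction N, X using Germ.inductionOn₂ with | h n x =>
    exact infinitesimal_ofSeq_iff.2 <| h (fun i => (n i, x i)) <| tendsto_prod_iff'.2
      ⟨Germ.forall_natCast_lt_coe_iff_tendsto.1 hN, tendsto_principal.2 hX⟩
  · intro h nx hnx
    obtain ⟨hn, hx⟩ := tendsto_prod_iff'.1 hnx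
    exact infinitesimal_ofSeq_iff.1 <| h _ (Germ.forall_natCast_lt_coe_iff_tendsto.2 hn)
      (ofSeq fun i => (nx i).2) (tendsto_principal.1 hx)
end

section
/- (Abel's series fails Cauchy's 1853 hypothesis at the infinitesimal generated by 1/n.) Let a : ℕ → ℝ be defined by a n = ∑_{k ∈ Finset.Ioc n (2n)} Real.sin (k / n) / k. Then the hyperreal Hyperreal.ofSeq a is infinitely close to the real number ∫ t in 1..2, Real.sin t / t (i.e., Hyperreal.IsSt (Hyperreal.ofSeq a) (∫ t in 1..2, Real.sin t / t)), and Hyperreal.ofSeq a is NOT infinitesimal. -/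
/-!
The `n`-th term is the right Riemann sum, with mesh `1/n`, of `sin t / t` on `[1, 2]`. This
function is antitone there, and the right Riemann sums of an antitone function `f` on `[p, q]` lie
between `∫ f - (f p - f q) / n` and `∫ f`, so the sequence tends to the integral, which is therefore
its standard part. The integral is at least `sin 2 / 2 > 0`, so the hyperreal is not infinitesimal.
-/

open Hyperreal Real Set Filter Topology

theorem intervalIntegral.integral_comp_div_div (f : ℝ → ℝ) {c : ℝ} (hc : c ≠ 0) (a b : ℝ) :
    ∫ x in a * c..b * c, f (x / c) / c = ∫ x in a..b, f x := by
  rw [intervalIntegral.integral_div, intervalIntegral.integral_comp_div f hc,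
    mul_div_cancel_right₀ _ hc, mul_div_cancel_right₀ _ hc, smul_eq_mul, mul_div_cancel_left₀ _ hc]

namespace AntitoneOn

variable {f : ℝ → ℝ}

theorem comp_div_div {a b c : ℝ} (hf : AntitoneOn f (Icc a b)) (hc : 0 < c) :
    AntitoneOn (fun x => f (x / c) / c) (Icc (a * c) (b * c)) := by
  have hmaps : ∀ x ∈ Icc (a * c) (b * c), x / c ∈ Icc a b := fun x hx =>
    ⟨(le_div_iff₀ hc).2 hx.1, (div_le_iff₀ hc).2 hx.2⟩
  intro x hx y hy hxy
  exact div_le_div_of_nonneg_right (hf (hmaps x hx) (hmaps y hy) (by gcongr)) hc.le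

theorem sum_Ioc_le_integral {a b : ℕ} (hab : a ≤ b) (hf : AntitoneOn f (Icc a b)) :
    ∑ k ∈ Finset.Ioc a b, f k ≤ ∫ x in a..b, f x := by
  have h := hf.sum_le_integral_Ico hab
  rwa [Finset.sum_Ico_add' (fun k : ℕ => f k), Finset.Ico_add_one_add_one_eq_Ioc] at h

theorem integral_le_sum_Ioc_add {a b : ℕ} (hab : a ≤ b) (hf : AntitoneOn f (Icc a b)) :
    ∫ x in a..b, f x ≤ ∑ k ∈ Finset.Ioc a b, f k + (f a - f b) := by
  have h := hf.integral_le_sum_Ico hab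
  have hsplit := (Finset.sum_Ioc_add_eq_sum_Icc (f := fun k : ℕ => f k) hab).trans
    (Finset.sum_Ico_add_eq_sum_Icc hab).symm
  linarith

variable {p q n : ℕ}

theorem sum_Ioc_div_le_integral (hpq : p ≤ q) (hf : AntitoneOn f (Icc p q)) (hn : 0 < n) :
    ∑ k ∈ Finset.Ioc (p * n) (q * n), f (k / n) / n ≤ ∫ x in p..q, f x := by
  have hn' : (0 : ℝ) < n := by exact_mod_cast hn
  have h := sum_Ioc_le_integral (Nat.mul_le_mul_right n hpq)
    (by exact_mod_cast hf.comp_div_div hn')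
  push_cast at h
  rwa [intervalIntegral.integral_comp_div_div f hn'.ne'] at h

theorem integral_le_sum_Ioc_div_add (hpq : p ≤ q) (hf : AntitoneOn f (Icc p q)) (hn : 0 < n) :
    ∫ x in p..q, f x ≤ ∑ k ∈ Finset.Ioc (p * n) (q * n), f (k / n) / n + (f p - f q) / n := by
  have hn' : (0 : ℝ) < n := by exact_mod_cast hn
  have h := integral_le_sum_Ioc_add (Nat.mul_le_mul_right n hpq)
    (by exact_mod_cast hf.comp_div_div hn')
  push_cast at h
  rwa [intervalIntegral.integral_comp_div_div f hn'.ne', mul_div_cancel_right₀ _ hn'.ne',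
    mul_div_cancel_right₀ _ hn'.ne', ← sub_div] at h

theorem tendsto_sum_Ioc_div_integral (hpq : p ≤ q) (hf : AntitoneOn f (Icc p q)) :
    Tendsto (fun n : ℕ => ∑ k ∈ Finset.Ioc (p * n) (q * n), f (k / n) / n) atTop
      (𝓝 (∫ x in p..q, f x)) := by
  have hlower : Tendsto (fun n : ℕ => (∫ x in p..q, f x) - (f p - f q) / n) atTop
      (𝓝 (∫ x in p..q, f x)) := by
    simpa using tendsto_const_nhds.sub (tendsto_const_div_atTop_nhds_zero_nat (f p - f q))
  refine tendsto_of_tendsto_of_tendsto_of_le_of_le' hlower tendsto_const_nhds ?_ ?_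
  all_goals filter_upwards [eventually_gt_atTop 0] with n hn
  · linarith [integral_le_sum_Ioc_div_add hpq hf hn]
  · exact sum_Ioc_div_le_integral hpq hf hn

end AntitoneOn

theorem Real.antitoneOn_sin_div_self : AntitoneOn (fun t => sin t / t) (Ioc 0 π) := by
  -- `sin t / t` is the slope of the secant of the concave function `sin` through the origin.
  intro x hx y hy hxy
  have h := strictConcaveOn_sin_Icc.concaveOn.neg.secant_mono (a := 0) ⟨le_rfl, pi_pos.le⟩
    (Ioc_subset_Icc_self hx) (Ioc_subset_Icc_self hy) hx.1.ne' hy.1.ne' hxy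
  simp only [Pi.neg_apply, sin_zero, neg_zero, sub_zero, neg_div, neg_le_neg_iff] at h
  exact h

theorem sum_Ioc_sin_div_eq_riemannSum (n : ℕ) :
    ∑ k ∈ Finset.Ioc n (2 * n), sin ((k : ℝ) / n) / k
      = ∑ k ∈ Finset.Ioc (1 * n) (2 * n), sin ((k : ℝ) / n) / (k / n) / n := by
  rw [one_mul]
  refine Finset.sum_congr rfl fun k _ => ?_
  rcases eq_or_ne (n : ℝ) 0 with hn | hn
  · simp [hn]
  · rw [div_div, div_mul_cancel₀ _ hn]

theorem abel_series_fails_cauchy_hypothesis :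
    Hyperreal.IsSt
      (Hyperreal.ofSeq
        (fun n : ℕ => ∑ k ∈ Finset.Ioc n (2 * n), Real.sin ((k : ℝ) / (n : ℝ)) / (k : ℝ)))
      (∫ t in (1 : ℝ)..2, Real.sin t / t) ∧
    ¬ Hyperreal.Infinitesimal
      (Hyperreal.ofSeq
        (fun n : ℕ => ∑ k ∈ Finset.Ioc n (2 * n), Real.sin ((k : ℝ) / (n : ℝ)) / (k : ℝ))) := by
  have hanti : AntitoneOn (fun t => sin t / t) (Icc ((1 : ℕ) : ℝ) ((2 : ℕ) : ℝ)) :=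
    Real.antitoneOn_sin_div_self.mono fun t ht => by
      push_cast at ht; exact ⟨by linarith [ht.1], by linarith [ht.2, pi_gt_three]⟩
  have hlim := hanti.tendsto_sum_Ioc_div_integral (by norm_num)
  simp only [← sum_Ioc_sin_div_eq_riemannSum, Nat.cast_one, Nat.cast_ofNat] at hlim
  have hst := isSt_of_tendsto hlim
  refine ⟨hst, fun h0 => ?_⟩
  have hsin : 0 < sin 2 / 2 :=
    div_pos (sin_pos_of_pos_of_lt_pi two_pos (by linarith [pi_gt_three])) two_pos
  have hle := hanti.sum_Ioc_le_integral (by norm_num)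
  rw [show Finset.Ioc 1 2 = {2} by decide, Finset.sum_singleton] at hle
  push_cast at hle
  linarith [hst.unique h0]
end

section
/- For every real δ > 0, the sequence of partial sums of Abel's series, s n x = ∑_{k ∈ Finset.Icc 1 n} Real.sin (k * x) / k, is NOT uniformly Cauchy on the interval (0, δ): ¬ UniformCauchySeqOn (fun n x => ∑ k in Finset.Icc 1 n, Real.sin (k * x) / k) Filter.atTop (Set.Ioo 0 δ). (Hence the series ∑ sin(kx)/k does not converge uniformly on any right neighborhood of 0.) -/
/-!
Jordan's inequality `(2 / π) t ≤ sin t` on `[0, π / 2]` gives, at `x = π / (4n)`, the bound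
`sin (k x) / k ≥ (2 / π) x = 1 / (2n)` for each of the `n` indices `n < k ≤ 2n`. Hence
`s (2n) x - s n x ≥ 1 / 2` for every `n`, while these points `x` tend to `0` and so lie in `(0, δ)`.
-/

open Real Finset Filter

noncomputable def abelPartialSum (n : ℕ) (x : ℝ) : ℝ :=
  ∑ k ∈ Icc 1 n, sin (k * x) / k

lemma abelPartialSum_sub_abelPartialSum {m n : ℕ} (h : m ≤ n) (x : ℝ) :
    abelPartialSum n x - abelPartialSum m x = ∑ k ∈ Ioc m n, sin (k * x) / k := by
  rw [sub_eq_iff_eq_add']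
  -- on `ℕ`, `Icc 1 j` and `Ioc 0 j` agree definitionally
  exact (sum_Ioc_consecutive _ m.zero_le h).symm

lemma two_div_pi_mul_le_sin_mul_div {k x : ℝ} (hk : 0 < k) (hx : 0 ≤ x) (hkx : k * x ≤ π / 2) :
    2 / π * x ≤ sin (k * x) / k := by
  rw [le_div_iff₀ hk, mul_right_comm, mul_assoc]
  exact mul_le_sin (by positivity) hkx

lemma half_le_abelPartialSum_two_mul_sub {n : ℕ} (hn : 0 < n) :
    1 / 2 ≤ abelPartialSum (2 * n) (π / (4 * n)) - abelPartialSum n (π / (4 * n)) := by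
  have hn' : (0 : ℝ) < n := by exact_mod_cast hn
  have hterm : ∀ k ∈ Ioc n (2 * n), 1 / (2 * n : ℝ) ≤ sin (k * (π / (4 * n))) / k := by
    intro k hk
    have hk2n : (k : ℝ) ≤ 2 * n := by exact_mod_cast (mem_Ioc.mp hk).2
    have hkpos : (0 : ℝ) < k := by exact_mod_cast hn.trans (mem_Ioc.mp hk).1
    calc 1 / (2 * n : ℝ) = 2 / π * (π / (4 * n)) := by field_simp; ring
      _ ≤ _ := two_div_pi_mul_le_sin_mul_div hkpos (by positivity) (by
          rw [mul_div_assoc', div_le_div_iff₀ (by positivity) two_pos]; nlinarith [pi_pos])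
  calc (1 / 2 : ℝ) = #(Ioc n (2 * n)) • (1 / (2 * n : ℝ)) := by
        rw [Nat.card_Ioc, nsmul_eq_mul, show 2 * n - n = n by omega]; field_simp
    _ ≤ _ := by
        rw [abelPartialSum_sub_abelPartialSum (by omega)]
        exact card_nsmul_le_sum _ _ _ hterm

lemma tendsto_pi_div_four_mul_atTop :
    Tendsto (fun n : ℕ => π / (4 * n)) atTop (nhds 0) :=
  tendsto_const_nhds.div_atTop (tendsto_natCast_atTop_atTop.const_mul_atTop four_pos)

theorem abel_series_not_uniformly_cauchy (δ : ℝ) (hδ : 0 < δ) :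
    ¬ UniformCauchySeqOn
        (fun (n : ℕ) (x : ℝ) => ∑ k ∈ Finset.Icc 1 n, Real.sin ((k : ℝ) * x) / (k : ℝ))
        Filter.atTop (Set.Ioo 0 δ) := by
  change ¬ UniformCauchySeqOn abelPartialSum atTop (Set.Ioo 0 δ)
  intro h
  obtain ⟨N, hN⟩ := Metric.uniformCauchySeqOn_iff.mp h (1 / 2) one_half_pos
  obtain ⟨n, hnN, hn, hxδ⟩ := ((eventually_ge_atTop N).and ((eventually_gt_atTop 0).and
    (tendsto_pi_div_four_mul_atTop.eventually (gt_mem_nhds hδ)))).exists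
  have hdist := hN (2 * n) (by omega) n hnN (π / (4 * n)) ⟨by positivity, hxδ⟩
  rw [Real.dist_eq] at hdist
  linarith [(abs_lt.mp hdist).2, half_le_abelPartialSum_two_mul_sub hn]
end

section
/- (Abel's 'exception' to the 1821 sum theorem.) For every real x with 0 < x < 2π, the partial sums ∑_{k ∈ Finset.Icc 1 n} Real.sin (k * x) / k tend to (π − x) / 2 as n → ∞; at x = 0 every partial sum equals 0. Consequently the pointwise limit function S : ℝ → ℝ defined by S 0 = 0 and S x = (π − x)/2 for 0 < x < 2π is not continuous at 0, even though each term sin(kx)/k is a continuous function of x. -/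
/-!
Write `w = exp (x * I)`, so that `sin (k * x) / k` is the imaginary part of `w ^ k / k`. For
`‖w‖ ≤ 1`, `w ≠ 1`, the partial sums of `∑ w ^ k` are bounded, so `∑ w ^ k / k` converges by
Dirichlet's test, and Abel's limit theorem identifies its sum with the boundary value
`-log (1 - w)` of the Taylor series of `-log (1 - z)`. For `0 < x < 2π` we have
`1 - exp (x * I) = 2 sin (x / 2) · exp ((x - π) / 2 * I)` with `sin (x / 2) > 0`, hence
`Im (-log (1 - w)) = -arg (1 - w) = (π - x) / 2`. As `x → 0⁺` this tends to `π / 2`, not to the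
value `0` at `x = 0`.
-/

open Real Filter Finset Complex Topology

theorem norm_sum_range_pow_succ_le {𝕜 : Type*} [NormedField 𝕜] {w : 𝕜} (hw : ‖w‖ ≤ 1)
    (hw1 : w ≠ 1) (n : ℕ) : ‖∑ i ∈ range n, w ^ (i + 1)‖ ≤ 2 / ‖w - 1‖ := by
  have hsum : ∑ i ∈ range n, w ^ (i + 1) = w * ((w ^ n - 1) / (w - 1)) := by
    simp_rw [← geom_sum_eq hw1 n, mul_sum, pow_succ']
  have hnum : ‖w ^ n - 1‖ ≤ 2 := calc
    ‖w ^ n - 1‖ ≤ ‖w‖ ^ n + 1 := by simpa [norm_pow] using norm_sub_le (w ^ n) 1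
    _ ≤ 2 := by linarith [pow_le_one₀ (norm_nonneg w) hw (n := n)]
  rw [hsum, norm_mul, norm_div]
  calc ‖w‖ * (‖w ^ n - 1‖ / ‖w - 1‖) ≤ 1 * (2 / ‖w - 1‖) := by gcongr
    _ = 2 / ‖w - 1‖ := one_mul _

theorem Finset.sum_Icc_one_eq_sum_range_succ {M : Type*} [AddCommMonoid M] {f : ℕ → M}
    (h0 : f 0 = 0) (n : ℕ) : ∑ k ∈ Icc 1 n, f k = ∑ k ∈ range (n + 1), f k := by
  rw [range_eq_Ico, sum_eq_sum_Ico_succ_bot n.succ_pos, h0, zero_add]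
  rfl

theorem not_continuousAt_of_eqOn_Ioo {β : Type*} [TopologicalSpace β] [T2Space β]
    {f g : ℝ → β} {a b : ℝ} (hab : a < b) (hfg : Set.EqOn f g (Set.Ioo a b))
    (hg : ContinuousAt g a) (ha : f a ≠ g a) : ¬ ContinuousAt f a := fun hf ↦
  ha <| tendsto_nhds_unique (hf.tendsto.mono_left nhdsWithin_le_nhds)
    ((hg.tendsto.mono_left nhdsWithin_le_nhds).congr' <|
      eventuallyEq_of_mem (Ioo_mem_nhdsGT hab) hfg.symm)

theorem Complex.exists_tendsto_sum_range_pow_div {w : ℂ} (hw : ‖w‖ ≤ 1) (hw1 : w ≠ 1) :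
    ∃ L, Tendsto (fun n ↦ ∑ i ∈ range n, w ^ i / i) atTop (𝓝 L) := by
  have hC : CauchySeq fun n ↦ ∑ i ∈ range n, (1 / ((i : ℝ) + 1)) • w ^ (i + 1) :=
    Antitone.cauchySeq_series_mul_of_tendsto_zero_of_bounded
      (fun a b hab ↦ by gcongr) tendsto_one_div_add_atTop_nhds_zero_nat
      (norm_sum_range_pow_succ_le hw hw1)
  obtain ⟨L, hL⟩ := cauchySeq_tendsto_of_complete hC
  refine ⟨L, (tendsto_add_atTop_iff_nat 1).1 ?_⟩
  convert hL using 2 with n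
  rw [sum_range_succ']
  simp [Complex.real_smul, div_eq_inv_mul]

theorem Complex.re_one_sub_pos {w : ℂ} (hw : ‖w‖ ≤ 1) (hw1 : w ≠ 1) : 0 < (1 - w).re := by
  rw [sub_re, one_re, sub_pos]
  by_cases him : w.im = 0
  · refine lt_of_le_of_ne ?_ fun h ↦ hw1 (Complex.ext h him)
    exact (le_abs_self _).trans ((abs_re_le_norm w).trans hw)
  · exact (le_abs_self _).trans_lt ((abs_re_lt_norm.2 him).trans_le hw)

theorem Complex.tendsto_sum_range_pow_div {w : ℂ} (hw : ‖w‖ ≤ 1) (hw1 : w ≠ 1) :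
    Tendsto (fun n ↦ ∑ i ∈ range n, w ^ i / i) atTop (𝓝 (-log (1 - w))) := by
  obtain ⟨L, hL⟩ := exists_tendsto_sum_range_pow_div hw hw1
  have habel : Tendsto (fun r : ℝ ↦ ∑' n : ℕ, w ^ n / n * (r : ℂ) ^ n) (𝓝[<] 1) (𝓝 L) :=
    tendsto_map'_iff.mp (tendsto_tsum_powerSeries_nhdsWithin_lt hL)
  have hseries : ∀ᶠ r : ℝ in 𝓝[<] 1, ∑' n : ℕ, w ^ n / n * (r : ℂ) ^ n = -log (1 - r * w) := by
    filter_upwards [Ioo_mem_nhdsLT (show (-1 : ℝ) < 1 by norm_num)] with r hr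
    have hrw : ‖(r : ℂ) * w‖ < 1 := by
      rw [norm_mul, norm_real, Real.norm_eq_abs]
      exact (mul_le_of_le_one_right (abs_nonneg r) hw).trans_lt (abs_lt.2 hr)
    rw [← (hasSum_taylorSeries_neg_log hrw).tsum_eq]
    exact tsum_congr fun n ↦ by ring
  have hlog : ContinuousAt (fun r : ℝ ↦ -log (1 - r * w)) 1 := by
    refine (ContinuousAt.clog (by fun_prop) ?_).neg
    simpa [mem_slitPlane_iff] using Or.inl (re_one_sub_pos hw hw1)
  have hlim : L = -log (1 - w) := tendsto_nhds_unique (habel.congr' hseries)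
    (by simpa using hlog.tendsto.mono_left (nhdsWithin_le_nhds (s := Set.Iio 1)))
  exact hlim ▸ hL

theorem Complex.one_sub_exp_mul_I (x : ℝ) :
    1 - exp (x * I) = (2 * Real.sin (x / 2) : ℝ) *
      (cos ((x - π) / 2 : ℝ) + sin ((x - π) / 2 : ℝ) * I) := by
  have hcos : Complex.cos ((x - π) / 2 : ℝ) = Complex.sin (x / 2 : ℝ) := by
    rw [← ofReal_cos, ← ofReal_sin, sub_div, Real.cos_sub_pi_div_two]
  have hsin : Complex.sin ((x - π) / 2 : ℝ) = -Complex.cos (x / 2 : ℝ) := by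
    rw [← ofReal_cos, ← ofReal_sin, sub_div, Real.sin_sub_pi_div_two, ofReal_neg]
  have hx : (x : ℂ) = 2 * (x / 2 : ℝ) := by push_cast; ring
  rw [hcos, hsin, hx, exp_mul_I, cos_two_mul, sin_two_mul, cos_sq']
  push_cast
  ring

theorem Complex.arg_one_sub_exp_mul_I {x : ℝ} (hx0 : 0 < x) (hx2 : x < 2 * π) :
    arg (1 - exp (x * I)) = (x - π) / 2 := by
  rw [one_sub_exp_mul_I, arg_mul_cos_add_sin_mul_I]
  · have := Real.sin_pos_of_pos_of_lt_pi (x := x / 2) (by linarith) (by linarith)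
    positivity
  · constructor <;> linarith [Real.pi_pos]

theorem Complex.exp_mul_I_ne_one {x : ℝ} (hx0 : 0 < x) (hx2 : x < 2 * π) :
    exp (x * I) ≠ 1 := by
  have hsin := Real.sin_pos_of_pos_of_lt_pi (x := x / 2) (by linarith) (by linarith)
  rw [← sub_ne_zero, ← norm_ne_zero_iff, ← norm_neg, neg_sub, one_sub_exp_mul_I, norm_mul,
    norm_cos_add_sin_mul_I, mul_one, norm_real, Real.norm_of_nonneg (by positivity)]
  positivity

theorem Complex.im_exp_mul_I_pow_div (x : ℝ) (k : ℕ) :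
    (exp (x * I) ^ k / k).im = Real.sin (k * x) / k := by
  rw [← exp_nat_mul, ← mul_assoc, ← ofReal_natCast, ← ofReal_mul, div_ofReal_im,
    exp_ofReal_mul_I_im]

theorem tendsto_sum_Icc_sin_mul_div {x : ℝ} (hx0 : 0 < x) (hx2 : x < 2 * π) :
    Tendsto (fun n : ℕ ↦ ∑ k ∈ Icc 1 n, Real.sin (k * x) / k) atTop (𝓝 ((π - x) / 2)) := by
  set w := exp (x * I)
  have hw : ‖w‖ = 1 := norm_exp_ofReal_mul_I x
  have hw1 : w ≠ 1 := exp_mul_I_ne_one hx0 hx2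
  have him : (-log (1 - w)).im = (π - x) / 2 := by
    rw [neg_im, log_im, arg_one_sub_exp_mul_I hx0 hx2]
    ring
  rw [← him]
  refine ((tendsto_add_atTop_iff_nat 1).2
    ((continuous_im.tendsto _).comp (tendsto_sum_range_pow_div hw.le hw1))).congr fun n ↦ ?_
  rw [Function.comp_apply, im_sum, sum_Icc_one_eq_sum_range_succ (by simp)]
  exact sum_congr rfl fun k _ ↦ im_exp_mul_I_pow_div x k

theorem abel_exception :
    (∀ x : ℝ, 0 < x → x < 2 * Real.pi →
      Filter.Tendsto
        (fun n : ℕ => ∑ k ∈ Finset.Icc 1 n, Real.sin ((k : ℝ) * x) / (k : ℝ))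
        Filter.atTop (nhds ((Real.pi - x) / 2))) ∧
    (∀ n : ℕ, ∑ k ∈ Finset.Icc 1 n, Real.sin ((k : ℝ) * 0) / (k : ℝ) = 0) ∧
    (∀ S : ℝ → ℝ, S 0 = 0 →
      (∀ x : ℝ, 0 < x → x < 2 * Real.pi → S x = (Real.pi - x) / 2) →
      ¬ ContinuousAt S 0) ∧
    (∀ k : ℕ, Continuous fun x : ℝ => Real.sin ((k : ℝ) * x) / (k : ℝ)) := by
  refine ⟨fun x ↦ tendsto_sum_Icc_sin_mul_div, fun n ↦ by simp, fun S hS0 hS ↦ ?_,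
    fun k ↦ by fun_prop⟩
  refine not_continuousAt_of_eqOn_Ioo two_pi_pos (fun x hx ↦ hS x hx.1 hx.2)
    (g := fun x ↦ (π - x) / 2) (by fun_prop) ?_
  rw [hS0]
  linarith [pi_pos]
end

section
/- The sequence n ↦ Real.sin (n / 2) − Real.sin n (with n : ℕ cast to ℝ) does not tend to 0 as n → ∞: ¬ Filter.Tendsto (fun n : ℕ => Real.sin (n / 2) − Real.sin n) Filter.atTop (nhds 0). (This is the difference f(x+i) − f(x) for f(x) = sin(1/x) evaluated at x = 1/n with infinitesimal increment i = 1/n.) -/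
/-!
Write `s = sin x`, `c = cos x`. Then `sin x - sin 2x = s (1 - 2c)` and
`sin 2x - sin 4x = s · 2c (3 - 4c²)`, and the two polynomial factors cannot both be small;
so along the subsequences `2n` and `4n` the hypothesis forces `sin n → 0`. But
`sin (n + 1) = sin n cos 1 + cos n sin 1` then forces `cos n → 0` as well, contradicting
`sin² + cos² = 1`.
-/

open Filter Topology Real

lemma one_fourth_le_abs_add_abs (c : ℝ) :
    1 / 4 ≤ |1 - 2 * c| + |2 * c * (3 - 4 * c ^ 2)| := by
  rcases le_or_gt (1 / 4) |1 - 2 * c| with h | h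
  · linarith [abs_nonneg (2 * c * (3 - 4 * c ^ 2))]
  · obtain ⟨hlo, hhi⟩ := abs_lt.mp h
    have : 1 ≤ 2 * c * (3 - 4 * c ^ 2) := by nlinarith
    linarith [le_abs_self (2 * c * (3 - 4 * c ^ 2)), abs_nonneg (1 - 2 * c)]

lemma Real.abs_sin_le_abs_sin_sub_sin_two_mul_add (x : ℝ) :
    |sin x| ≤ 4 * (|sin x - sin (2 * x)| + |sin (2 * x) - sin (2 * (2 * x))|) := by
  have h₁ : sin x - sin (2 * x) = sin x * (1 - 2 * cos x) := by
    rw [sin_two_mul]; ring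
  have h₂ : sin (2 * x) - sin (2 * (2 * x)) = sin x * (2 * cos x * (3 - 4 * cos x ^ 2)) := by
    rw [sin_two_mul (2 * x), sin_two_mul, cos_two_mul]; ring
  rw [h₁, h₂, abs_mul, abs_mul]
  nlinarith [one_fourth_le_abs_add_abs (cos x), abs_nonneg (sin x)]

lemma Real.not_tendsto_sin_nat_mul_atTop_nhds_zero {x : ℝ} (hx : sin x ≠ 0) :
    ¬ Tendsto (fun n : ℕ => sin (n * x)) atTop (𝓝 0) := by
  intro hsin
  have hcos : Tendsto (fun n : ℕ => cos (n * x)) atTop (𝓝 0) := by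
    have hshift : Tendsto (fun n : ℕ => sin ((n + 1) * x)) atTop (𝓝 0) := by
      simpa using (tendsto_add_atTop_iff_nat 1).2 hsin
    have hrec : ∀ n : ℕ, cos (n * x) = (sin ((n + 1) * x) - sin (n * x) * cos x) / sin x := by
      intro n
      rw [eq_div_iff hx, add_one_mul, sin_add]
      ring
    simpa [← hrec] using (hshift.sub (hsin.mul_const (cos x))).div_const (sin x)
  have hone := (hsin.pow 2).add (hcos.pow 2)
  simp only [sin_sq_add_cos_sq] at hone
  exact one_ne_zero (tendsto_nhds_unique tendsto_const_nhds hone |>.trans (by norm_num))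

theorem sin_half_sub_sin_not_tendsto_zero :
    ¬ Filter.Tendsto (fun n : ℕ => Real.sin ((n : ℝ) / 2) - Real.sin (n : ℝ))
        Filter.atTop (nhds 0) := by
  intro h
  have hsub : ∀ k : ℕ, 0 < k →
      Tendsto (fun n : ℕ => sin (k * n) - sin (2 * (k * n))) atTop (𝓝 0) := by
    intro k hk
    have hmul : Tendsto (fun n : ℕ => 2 * k * n) atTop atTop :=
      tendsto_id.const_mul_atTop' (by positivity)
    convert h.comp hmul using 2 with n
    simp only [Function.comp_apply]
    push_cast
    ring_nf
  have hsin : Tendsto (fun n : ℕ => sin (n * 1)) atTop (𝓝 0) := by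
    have hbound := ((hsub 1 one_pos).abs.add (hsub 2 two_pos).abs).const_mul 4
    simp only [abs_zero, add_zero, mul_zero] at hbound
    refine squeeze_zero_norm (fun n => ?_) hbound
    simpa [mul_assoc] using abs_sin_le_abs_sin_sub_sin_two_mul_add (n : ℝ)
  exact not_tendsto_sin_nat_mul_atTop_nhds_zero
    (sin_pos_of_pos_of_lt_pi one_pos (by linarith [pi_gt_three])).ne' hsin
end

section
/- (sin(1/x) fails Cauchy's continuity test on the B-continuum.) Let f : ℝ → ℝ be f x = Real.sin x⁻¹, and set ξ = Hyperreal.ofSeq (fun n => (2 * π * (n + 1) + π / 2)⁻¹) and η = Hyperreal.ofSeq (fun n => (2 * π * (n + 1))⁻¹). Then ξ and η are positive infinitesimal hyperreals, ξ − η is infinitesimal, yet Filter.Germ.map f ξ − Filter.Germ.map f η = 1; in particular the infinitesimal increment ξ − η of the variable does not produce an infinitesimal increment of the function. -/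
/-!
Both points are reciprocals of sequences tending to `+∞`, hence positive infinitesimals, and so is
their difference. Since `f` undoes the reciprocal, `f ξ` and `f η` are the germs of
`sin (2π(n+1) + π/2) = 1` and `sin (2π(n+1)) = 0`.
-/

open Hyperreal Real Filter

namespace Hyperreal

variable {t : ℕ → ℝ}

theorem ofSeq_inv : ofSeq (fun n => (t n)⁻¹) = (ofSeq t)⁻¹ := rfl

theorem inv_ofSeq_pos_of_tendsto_atTop (ht : Tendsto t atTop atTop) : 0 < (ofSeq t)⁻¹ :=
  inv_pos.2 (infinitePos_of_tendsto_top ht).pos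

theorem infinitesimal_inv_ofSeq_of_tendsto_atTop (ht : Tendsto t atTop atTop) :
    Infinitesimal (ofSeq t)⁻¹ :=
  infinitesimal_inv_of_infinite (Or.inl (infinitePos_of_tendsto_top ht))

theorem Infinitesimal.sub {x y : ℝ*} (hx : Infinitesimal x) (hy : Infinitesimal y) :
    Infinitesimal (x - y) :=
  sub_eq_add_neg x y ▸ hx.add hy.neg

theorem germ_map_comp_inv_inv_ofSeq (g : ℝ → ℝ) :
    Germ.map (fun x => g x⁻¹) ((ofSeq t)⁻¹ : ℝ*) = ofSeq (g ∘ t) := by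
  rw [← ofSeq_inv]
  exact congrArg ofSeq (funext fun n => congrArg g (inv_inv (t n)))

end Hyperreal

theorem tendsto_two_pi_mul_natCast_add_one_add_atTop (c : ℝ) :
    Tendsto (fun n : ℕ => 2 * π * ((n : ℝ) + 1) + c) atTop atTop :=
  tendsto_atTop_add_const_right _ c <| (tendsto_natCast_atTop_atTop.atTop_add tendsto_const_nhds
    |>.const_mul_atTop two_pi_pos)

theorem sin_two_pi_mul_natCast_add_one_add (n : ℕ) (x : ℝ) :
    sin (2 * π * ((n : ℝ) + 1) + x) = sin x := by
  rw [show 2 * π * ((n : ℝ) + 1) + x = x + ((n + 1 : ℕ) : ℝ) * (2 * π) by push_cast; ring,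
    sin_add_nat_mul_two_pi]

theorem sin_inv_fails_cauchy_continuity_test (f : ℝ → ℝ) (hf : ∀ x : ℝ, f x = Real.sin x⁻¹)
    (ξ η : ℝ*)
    (hξ : ξ = Hyperreal.ofSeq (fun n : ℕ => (2 * Real.pi * ((n : ℝ) + 1) + Real.pi / 2)⁻¹))
    (hη : η = Hyperreal.ofSeq (fun n : ℕ => (2 * Real.pi * ((n : ℝ) + 1))⁻¹)) :
    0 < ξ ∧ Hyperreal.Infinitesimal ξ ∧
    0 < η ∧ Hyperreal.Infinitesimal η ∧
    Hyperreal.Infinitesimal (ξ - η) ∧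
    Filter.Germ.map f ξ - Filter.Germ.map f η = 1 := by
  have hξt := tendsto_two_pi_mul_natCast_add_one_add_atTop (π / 2)
  have hηt : Tendsto (fun n : ℕ => 2 * π * ((n : ℝ) + 1)) atTop atTop := by
    simpa using tendsto_two_pi_mul_natCast_add_one_add_atTop 0
  rw [ofSeq_inv] at hξ hη
  have hξ_inf := hξ ▸ infinitesimal_inv_ofSeq_of_tendsto_atTop hξt
  have hη_inf := hη ▸ infinitesimal_inv_ofSeq_of_tendsto_atTop hηt
  refine ⟨hξ ▸ inv_ofSeq_pos_of_tendsto_atTop hξt, hξ_inf,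
    hη ▸ inv_ofSeq_pos_of_tendsto_atTop hηt, hη_inf, hξ_inf.sub hη_inf, ?_⟩
  obtain rfl : f = fun x => sin x⁻¹ := funext hf
  rw [hξ, hη, germ_map_comp_inv_inv_ofSeq sin, germ_map_comp_inv_inv_ofSeq sin]
  have hsinξ : sin ∘ (fun n : ℕ => 2 * π * ((n : ℝ) + 1) + π / 2) = fun _ => 1 := by
    ext n; simp only [Function.comp_apply, sin_two_pi_mul_natCast_add_one_add, sin_pi_div_two]
  have hsinη : sin ∘ (fun n : ℕ => 2 * π * ((n : ℝ) + 1)) = fun _ => 0 := by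
    ext n; simpa using sin_two_pi_mul_natCast_add_one_add n 0
  rw [hsinξ, hsinη]
  -- the germs of the constant sequences are `1` and `0` by definition
  exact sub_zero 1
end

section
/- (Fermat–Robinson standard part definition of the derivative.) Let f : ℝ → ℝ and x, L : ℝ. Then f has derivative L at x (HasDerivAt f L x) if and only if for every nonzero infinitesimal hyperreal ε : ℝ*, the difference quotient (Filter.Germ.map f (↑x + ε) − ↑(f x)) / ε is infinitely close to L (Hyperreal.IsSt ((Filter.Germ.map f (↑x + ε) − ↑(f x)) / ε) L). -/
/-!
A hyperreal is the germ of a real sequence along the hyperfilter, and the nonzero infinitesimals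
are exactly the germs tending to `0` through nonzero values. Since `𝓝[≠] 0` is countably
generated, the limit of the difference quotient at `0` can be tested on such germs alone: if the
quotient fails to converge along some null sequence, a subsequence stays outside a fixed
neighbourhood of `L`, and the germ of that subsequence is an infinitesimal witnessing the failure.
-/

open Hyperreal Filter Topology

theorem Filter.tendsto_iff_forall_germ_map_tendsto {α β : Type*} {l : Filter α}
    [l.IsCountablyGenerated] {lb : Filter β} {g : α → β} :
    Tendsto g l lb ↔
      ∀ x : Germ (hyperfilter ℕ : Filter ℕ) α, x.Tendsto l → (x.map g).Tendsto lb := by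
  refine ⟨fun hg x hx => x.inductionOn (fun _ hu => hg.comp hu) hx, fun H => ?_⟩
  rw [tendsto_iff_seq_tendsto]
  intro u hu
  by_contra hnot
  obtain ⟨V, hV, hfreq⟩ := not_tendsto_iff_exists_frequently_notMem.1 hnot
  obtain ⟨φ, hφ, hφV⟩ := extraction_of_frequently_atTop hfreq
  have hsub : Tendsto (u ∘ φ) (hyperfilter ℕ) l :=
    (hu.comp hφ.tendsto_atTop).mono_left Nat.hyperfilter_le_atTop
  have hin : ∀ᶠ n in hyperfilter ℕ, g (u (φ n)) ∈ V := H (u ∘ φ : Germ _ α) hsub.germ_tendsto hV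
  obtain ⟨n, hn⟩ := hin.exists
  exact hφV n hn

theorem Filter.Germ.tendsto_nhdsNE_iff {ι β : Type*} [TopologicalSpace β] {φ : Ultrafilter ι}
    {x : Germ (φ : Filter ι) β} {a : β} :
    x.Tendsto (𝓝[≠] a) ↔ x ≠ ↑a ∧ x.Tendsto (𝓝 a) := by
  induction x using Germ.inductionOn with
  | _ u =>
    rw [ne_eq, Germ.coe_tendsto, Germ.coe_tendsto, tendsto_nhdsWithin_iff, Germ.const,
      Germ.coe_eq, EventuallyEq, ← Ultrafilter.eventually_not]
    exact and_comm

set_option linter.deprecated false in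
theorem hasDerivAt_iff_isSt_diffQuotient (f : ℝ → ℝ) (x L : ℝ) :
    HasDerivAt f L x ↔
      ∀ e : ℝ*, e ≠ 0 → Hyperreal.Infinitesimal e →
        Hyperreal.IsSt
          (((show ℝ* from Filter.Germ.map f ((x : ℝ*) + e)) - ((f x : ℝ) : ℝ*)) / e) L := by
  set q : ℝ → ℝ := fun t => (f (x + t) - f x) / t
  have hslope : HasDerivAt f L x ↔ Tendsto q (𝓝[≠] 0) (𝓝 L) := by
    rw [hasDerivAt_iff_tendsto_slope_zero]
    simp only [q, smul_eq_mul, div_eq_inv_mul]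
  have hmap (e : ℝ*) :
      e.map q = ((show ℝ* from Filter.Germ.map f ((x : ℝ*) + e)) - ((f x : ℝ) : ℝ*)) / e :=
    e.inductionOn fun _ => rfl
  rw [hslope, tendsto_iff_forall_germ_map_tendsto]
  refine forall_congr' fun (e : ℝ*) => ?_
  rw [← hmap]
  exact (imp_congr (Germ.tendsto_nhdsNE_iff.trans (and_congr Iff.rfl isSt_iff_tendsto.symm))
    isSt_iff_tendsto.symm).trans and_imp
end
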